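/- Let G=(V,E) be a finite simple undirected graph, let x ∈ V, let A ⊆ V, let T ≥ 0 be an integer, and let λ > 0. Let esc(x,T,A) be the probability that a lazy random walk started from x leaves A within the first T steps. Then the volume-biased evolving set process started from {x} satisfies P̂_x[ max_{0 ≤ t ≤ T} μ(S_t \ A)/μ(S_t) > λ · esc(x,T,A) ] < 1/λ. -/

import Mathlib

open scoped Classical symmDiff

noncomputable section

variable {V : Type*} [Fintype V] [DecidableEq V]

/-- The volume `μ(S)` of a set of vertices: the sum of the degrees. -/
def vol (G : SimpleGraph V) [DecidableRel G.Adj] (S : Finset V) : ℝ :=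
  ∑ x ∈ S, (G.degree x : ℝ)

/-- The number of edges leaving `S`, i.e. `∂(S) = e(S, Sᶜ)`. -/
def bdry (G : SimpleGraph V) [DecidableRel G.Adj] (S : Finset V) : ℝ :=
  ∑ x ∈ S, ((Sᶜ.filter (G.Adj x)).card : ℝ)

/-- The conductance `φ(S) = ∂(S)/μ(S)`. -/
def phiCond (G : SimpleGraph V) [DecidableRel G.Adj] (S : Finset V) : ℝ :=
  bdry G S / vol G S

/-- The lazy random walk kernel `p(x,y)`: `1/2` if `x = y`, `1/(2 d(x))` if `x ~ y`,
and `0` otherwise. -/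
def walkP (G : SimpleGraph V) [DecidableRel G.Adj] (x y : V) : ℝ :=
  if x = y then 1/2 else if G.Adj x y then 1 / (2 * (G.degree x : ℝ)) else 0

/-- `p(x,S) = Σ_{y∈S} p(x,y)`. -/
def pset (G : SimpleGraph V) [DecidableRel G.Adj] (x : V) (S : Finset V) : ℝ :=
  ∑ y ∈ S, walkP G x y

/-- One step of the evolving set process from `S` with threshold `u`:
`S₁ = {y : p(y,S) ≥ u}`. -/
def esStep (G : SimpleGraph V) [DecidableRel G.Adj] (S : Finset V) (u : ℝ) : Finset V :=
  Finset.univ.filter fun y => u ≤ pset G y S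

/-- The ESP transition kernel `K(S,S')`: the probability, for a uniform threshold
`U ∈ [0,1]`, that `{y : p(y,S) ≥ U} = S'`. -/
def Kk (G : SimpleGraph V) [DecidableRel G.Adj] (S S' : Finset V) : ℝ :=
  (MeasureTheory.volume {u : ℝ | u ∈ Set.Icc (0:ℝ) 1 ∧ esStep G S u = S'}).toReal

/-- The volume-biased ESP transition kernel `K̂(S,S') = (μ(S')/μ(S)) K(S,S')`. -/
def Khat (G : SimpleGraph V) [DecidableRel G.Adj] (S S' : Finset V) : ℝ :=
  vol G S' / vol G S * Kk G S S'

/-- `esc(x,T,A)`: the probability that the lazy random walk started from `x`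
leaves `A` within the first `T` steps. -/
def escProb (G : SimpleGraph V) [DecidableRel G.Adj] (x : V) (T : ℕ) (A : Finset V) : ℝ :=
  ∑ v : Fin (T+1) → V,
    if v 0 = x ∧ ∃ j : Fin (T+1), v j ∉ A
    then ∏ j : Fin T, walkP G (v j.castSucc) (v j.succ) else 0

/-- Expectation of `f` over length-`(t+1)` sample paths `(S₀, …, S_t)` of the Markov
chain with transition kernel `κ` started at `S₀`. -/
def Epath (κ : Finset V → Finset V → ℝ) (S₀ : Finset V) (t : ℕ)
    (f : (Fin (t+1) → Finset V) → ℝ) : ℝ :=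
  ∑ w : Fin (t+1) → Finset V,
    if w 0 = S₀ then (∏ j : Fin t, κ (w j.castSucc) (w j.succ)) * f w else 0

/-!
Write `⟨g⟩_S = ∑_{y ∈ S} d(y) g(y) / μ(S)`. Since `P[z ∈ S₁] = p(z, S)` for the evolving set
process, reversibility of the lazy walk gives `∑_{S'} K̂(S, S') ⟨g⟩_{S'} = ⟨P g⟩_S`: degree-weighted
averages over the volume-biased process evolve like the walk itself. Let `h_n(y)` be the
probability that the walk from `y` leaves `A` within `n` steps. Then `P h_n ≤ h_{n+1}`, and
`h_n = 1` outside `A` at vertices of positive degree, so `⟨h_{T-t}⟩_{S_t}` is a supermartingale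
dominating the ratio `μ(S_t \ A) / μ(S_t)`. Stopping at the first time the ratio exceeds
`c = λ · esc(x, T, A)` yields `c · P̂[the ratio exceeds c by time T] < Ê[ratio at the stopping
time] ≤ h_T(x) = esc(x, T, A)`.
-/

open Finset

section StoppedSum

variable {α : Type*} [Fintype α] {κ : α → α → ℝ} {B : α → Prop}

/-- `stoppedSum κ B φ n a` is the expectation of `φ(X_τ) 1_{τ ≤ n}` for the chain with kernel `κ`
started at `a`, where `τ` is the hitting time of `B`. -/
def stoppedSum (κ : α → α → ℝ) (B : α → Prop) (φ : α → ℝ) : ℕ → α → ℝ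
  | 0, a => if B a then φ a else 0
  | n + 1, a => if B a then φ a else ∑ b, κ a b * stoppedSum κ B φ n b

theorem stoppedSum_le_of_supermartingale (hκ : ∀ a b, 0 ≤ κ a b) {φ : α → ℝ} {F : ℕ → α → ℝ}
    (hF0 : ∀ a, 0 ≤ F 0 a) (hstop : ∀ n a, B a → φ a ≤ F n a)
    (hstep : ∀ n a, ¬ B a → ∑ b, κ a b * F n b ≤ F (n + 1) a) :
    ∀ (n : ℕ) (a : α), stoppedSum κ B φ n a ≤ F n a
  | 0, a => by
    rw [stoppedSum]
    split_ifs with ha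
    exacts [hstop 0 a ha, hF0 a]
  | n + 1, a => by
    rw [stoppedSum]
    split_ifs with ha
    · exact hstop (n + 1) a ha
    · refine le_trans (sum_le_sum fun b _ => ?_) (hstep n a ha)
      exact mul_le_mul_of_nonneg_left
        (stoppedSum_le_of_supermartingale hκ hF0 hstop hstep n b) (hκ a b)

theorem mul_stoppedSum_one_le (hκ : ∀ a b, 0 ≤ κ a b) {c : ℝ} {φ : α → ℝ}
    (hφ : ∀ a, B a → c ≤ φ a) :
    ∀ (n : ℕ) (a : α), c * stoppedSum κ B (fun _ => 1) n a ≤ stoppedSum κ B φ n a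
  | 0, a => by
    simp only [stoppedSum]
    split_ifs with ha
    · simpa using hφ a ha
    · simp
  | n + 1, a => by
    simp only [stoppedSum]
    split_ifs with ha
    · simpa using hφ a ha
    · rw [mul_sum]
      refine sum_le_sum fun b _ => ?_
      rw [mul_left_comm]
      exact mul_le_mul_of_nonneg_left (mul_stoppedSum_one_le hκ hφ n b) (hκ a b)

theorem mul_stoppedSum_one_lt (hκ : ∀ a b, 0 ≤ κ a b) {c : ℝ} {φ : α → ℝ}
    (hφ : ∀ a, B a → c < φ a) :
    ∀ (n : ℕ) (a : α), 0 < stoppedSum κ B (fun _ => 1) n a →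
      c * stoppedSum κ B (fun _ => 1) n a < stoppedSum κ B φ n a
  | 0, a, hpos => by
    simp only [stoppedSum] at hpos ⊢
    split_ifs at hpos ⊢ with ha
    · simpa using hφ a ha
    · exact absurd hpos (lt_irrefl 0)
  | n + 1, a, hpos => by
    simp only [stoppedSum] at hpos ⊢
    split_ifs at hpos ⊢ with ha
    · simpa using hφ a ha
    · obtain ⟨b, -, hb⟩ := exists_lt_of_sum_lt (f := fun _ => (0 : ℝ)) (by simpa using hpos)
      have hκb : 0 < κ a b := (hκ a b).lt_of_ne (by rintro h; simp [← h] at hb)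
      rw [mul_sum]
      refine sum_lt_sum (fun b _ => ?_) ⟨b, mem_univ b, ?_⟩ <;> rw [mul_left_comm]
      · exact mul_le_mul_of_nonneg_left
          (mul_stoppedSum_one_le hκ (fun a ha => (hφ a ha).le) n b) (hκ a b)
      · exact mul_lt_mul_of_pos_left
          (mul_stoppedSum_one_lt hκ hφ n b (pos_of_mul_pos_right hb (hκ a b))) hκb

end StoppedSum

section PathSum

variable {α : Type*} [Fintype α] [DecidableEq α]

def pathSum (κ : α → α → ℝ) (a : α) (n : ℕ) (f : (Fin (n + 1) → α) → ℝ) : ℝ :=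
  ∑ w : Fin (n + 1) → α,
    if w 0 = a then (∏ j : Fin n, κ (w j.castSucc) (w j.succ)) * f w else 0

variable (κ : α → α → ℝ)

theorem pathSum_zero (a : α) (f : (Fin 1 → α) → ℝ) : pathSum κ a 0 f = f fun _ => a := by
  rw [pathSum, sum_eq_single_of_mem (fun _ => a) (mem_univ _)]
  · simp
  · intro w _ hw
    rw [if_neg]
    exact fun h => hw (funext fun i => by rw [Fin.fin_one_eq_zero i, h])

theorem pathSum_succ (a : α) (n : ℕ) (f : (Fin (n + 2) → α) → ℝ) :
    pathSum κ a (n + 1) f = ∑ b, κ a b * pathSum κ b n fun w => f (Fin.cons a w) := by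
  calc pathSum κ a (n + 1) f
      = ∑ u : Fin (n + 1) → α, κ a (u 0) *
          ((∏ j : Fin n, κ (u j.castSucc) (u j.succ)) * f (Fin.cons a u)) := by
        rw [pathSum, ← (Fin.consEquiv fun _ => α).sum_comp, Fintype.sum_prod_type]
        simp only [Fin.consEquiv_apply, Fin.cons_zero, Fin.cons_succ, Fin.prod_univ_succ,
          Fin.castSucc_zero, Fin.castSucc_succ, mul_assoc, sum_ite_irrel, sum_const_zero,
          sum_ite_eq', mem_univ, ↓reduceIte]
        rfl
    _ = ∑ b, κ a b * pathSum κ b n fun w => f (Fin.cons a w) := by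
        simp only [pathSum, mul_sum, mul_ite, mul_zero]
        rw [sum_comm]
        refine sum_congr rfl fun u _ => ?_
        rw [sum_ite_eq]
        simp

variable {κ}

theorem pathSum_mono (hκ : ∀ a b, 0 ≤ κ a b) (a : α) {n : ℕ} {f g : (Fin (n + 1) → α) → ℝ}
    (hfg : ∀ w, f w ≤ g w) : pathSum κ a n f ≤ pathSum κ a n g := by
  refine sum_le_sum fun w _ => ?_
  split_ifs
  · exact mul_le_mul_of_nonneg_left (hfg w) (prod_nonneg fun j _ => hκ _ _)
  · rfl

theorem pathSum_congr {a : α} {n : ℕ} {f g : (Fin (n + 1) → α) → ℝ}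
    (hfg : ∀ w, w 0 = a → f w = g w) : pathSum κ a n f = pathSum κ a n g := by
  refine sum_congr rfl fun w _ => ?_
  split_ifs with h
  · rw [hfg w h]
  · rfl

theorem pathSum_one_le_one (hκ : ∀ a b, 0 ≤ κ a b) (hrow : ∀ a, ∑ b, κ a b ≤ 1) :
    ∀ (n : ℕ) (a : α), pathSum κ a n (fun _ => 1) ≤ 1
  | 0, a => by rw [pathSum_zero]
  | n + 1, a => by
    rw [pathSum_succ]
    calc ∑ b, κ a b * pathSum κ b n (fun _ => 1) ≤ ∑ b, κ a b :=
          sum_le_sum fun b _ => mul_le_of_le_one_right (hκ a b) (pathSum_one_le_one hκ hrow n b)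
      _ ≤ 1 := hrow a

theorem pathSum_exists_le_stoppedSum {B : α → Prop} (hκ : ∀ a b, 0 ≤ κ a b)
    (hrow : ∀ a, ∑ b, κ a b ≤ 1) : ∀ (n : ℕ) (a : α),
      pathSum κ a n (fun w => if ∃ t, B (w t) then 1 else 0) ≤ stoppedSum κ B (fun _ => 1) n a
  | 0, a => by
    rw [pathSum_zero, stoppedSum]
    simp
  | n + 1, a => by
    by_cases ha : B a
    · rw [stoppedSum, if_pos ha]
      refine (pathSum_mono hκ a fun w => ?_).trans (pathSum_one_le_one hκ hrow (n + 1) a)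
      split_ifs <;> norm_num
    · rw [stoppedSum, if_neg ha, pathSum_succ]
      refine sum_le_sum fun b _ => mul_le_mul_of_nonneg_left (le_of_eq_of_le ?_
        (pathSum_exists_le_stoppedSum hκ hrow n b)) (hκ a b)
      simp [Fin.exists_fin_succ, ha]

end PathSum

section Walk

variable (G : SimpleGraph V) [DecidableRel G.Adj]

theorem walkP_nonneg (y z : V) : 0 ≤ walkP G y z := by
  unfold walkP
  split_ifs <;> positivity

theorem pset_nonneg (y : V) (S : Finset V) : 0 ≤ pset G y S :=
  sum_nonneg fun z _ => walkP_nonneg G y z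

theorem walkP_eq_add (y z : V) : walkP G y z =
    (if y = z then 1 / 2 else 0) + if G.Adj y z then 1 / (2 * (G.degree y : ℝ)) else 0 := by
  by_cases h : y = z
  · subst h; simp [walkP]
  · simp [walkP, h]

theorem sum_walkP (y : V) : ∑ z, walkP G y z = 1 / 2 + G.degree y / (2 * (G.degree y : ℝ)) := by
  simp only [walkP_eq_add, sum_add_distrib, sum_ite_eq, mem_univ, if_true, ← sum_filter, sum_const,
    ← G.neighborFinset_eq_filter, G.card_neighborFinset_eq_degree, nsmul_eq_mul]
  ring

theorem sum_walkP_le_one (y : V) : ∑ z, walkP G y z ≤ 1 := by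
  rw [sum_walkP]
  rcases eq_or_ne (G.degree y : ℝ) 0 with h | h
  · rw [h]; norm_num
  · rw [div_mul_cancel_right₀ h]; norm_num

theorem degree_mul_sum_walkP (y : V) : (G.degree y : ℝ) * ∑ z, walkP G y z = G.degree y := by
  rw [sum_walkP]
  rcases eq_or_ne (G.degree y : ℝ) 0 with h | h
  · rw [h, zero_mul]
  · field_simp; ring

theorem pset_le_one (y : V) (S : Finset V) : pset G y S ≤ 1 :=
  (sum_le_sum_of_subset_of_nonneg (subset_univ S) fun z _ _ => walkP_nonneg G y z).trans
    (sum_walkP_le_one G y)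

theorem degree_mul_walkP_comm (y z : V) :
    (G.degree y : ℝ) * walkP G y z = G.degree z * walkP G z y := by
  by_cases h : y = z
  · rw [h]
  by_cases ha : G.Adj y z
  · have hy : (G.degree y : ℝ) ≠ 0 :=
      Nat.cast_ne_zero.2 ((G.degree_pos_iff_exists_adj y).2 ⟨z, ha⟩).ne'
    have hz : (G.degree z : ℝ) ≠ 0 :=
      Nat.cast_ne_zero.2 ((G.degree_pos_iff_exists_adj z).2 ⟨y, ha.symm⟩).ne'
    simp only [walkP, if_neg h, if_neg (Ne.symm h), if_pos ha, if_pos ha.symm]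
    field_simp
  · have ha' : ¬ G.Adj z y := fun h' => ha h'.symm
    simp [walkP, h, Ne.symm h, ha, ha']

end Walk

section Escape

variable (G : SimpleGraph V) [DecidableRel G.Adj]

theorem escProb_eq_pathSum (y : V) (n : ℕ) (A : Finset V) :
    escProb G y n A = pathSum (walkP G) y n fun v => if ∃ j, v j ∉ A then 1 else 0 := by
  refine sum_congr rfl fun v _ => ?_
  by_cases h0 : v 0 = y <;> by_cases hA : ∃ j, v j ∉ A <;> simp [h0, hA]

theorem escProb_nonneg (y : V) (n : ℕ) (A : Finset V) : 0 ≤ escProb G y n A := by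
  rw [escProb_eq_pathSum]
  refine sum_nonneg fun v _ => ?_
  split_ifs
  · exact mul_nonneg (prod_nonneg fun j _ => walkP_nonneg G _ _) (by positivity)
  · rfl

theorem degree_mul_pathSum_walkP_one :
    ∀ (n : ℕ) (y : V), (G.degree y : ℝ) * pathSum (walkP G) y n (fun _ => 1) = G.degree y
  | 0, y => by rw [pathSum_zero, mul_one]
  | n + 1, y => by
    -- reversibility moves the degree weight from `y` to `z` and back
    calc (G.degree y : ℝ) * pathSum (walkP G) y (n + 1) (fun _ => 1)
        = ∑ z, walkP G z y * (G.degree z * pathSum (walkP G) z n (fun _ => 1)) := by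
          rw [pathSum_succ, mul_sum]
          refine sum_congr rfl fun z _ => ?_
          rw [← mul_assoc, degree_mul_walkP_comm]
          ring
      _ = G.degree y := by
          simp_rw [degree_mul_pathSum_walkP_one n, mul_comm (walkP G _ y),
            ← degree_mul_walkP_comm, ← mul_sum, degree_mul_sum_walkP]

theorem degree_mul_escProb_of_notMem {y : V} {A : Finset V} (hy : y ∉ A) (n : ℕ) :
    (G.degree y : ℝ) * escProb G y n A = G.degree y := by
  rw [escProb_eq_pathSum, pathSum_congr (g := fun _ => 1) fun v hv => if_pos ⟨0, hv ▸ hy⟩,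
    degree_mul_pathSum_walkP_one]

theorem sum_walkP_mul_escProb_le (y : V) (n : ℕ) (A : Finset V) :
    ∑ z, walkP G y z * escProb G z n A ≤ escProb G y (n + 1) A := by
  simp only [escProb_eq_pathSum, pathSum_succ]
  refine sum_le_sum fun z _ => mul_le_mul_of_nonneg_left
    (pathSum_mono (walkP_nonneg G) z fun v => ?_) (walkP_nonneg G y z)
  by_cases h : ∃ j, v j ∉ A
  · rw [if_pos h, if_pos (Fin.exists_fin_succ.2 (Or.inr (by simpa using h)))]
  · rw [if_neg h]
    split_ifs <;> norm_num

end Escape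

section EvolvingSet

open MeasureTheory

variable (G : SimpleGraph V) [DecidableRel G.Adj]

theorem esStep_antitone (S : Finset V) : Antitone (esStep G S) := fun u v huv y hy => by
  simp only [esStep, mem_filter, mem_univ, true_and] at hy ⊢
  exact huv.trans hy

theorem measurableSet_esStep_eq (S S' : Finset V) :
    MeasurableSet {u : ℝ | u ∈ Set.Icc (0 : ℝ) 1 ∧ esStep G S u = S'} := by
  refine Set.OrdConnected.measurableSet ⟨fun u hu v hv w hw => ⟨?_, ?_⟩⟩
  · exact ⟨hu.1.1.trans hw.1, hw.2.trans hv.1.2⟩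
  · exact le_antisymm (hu.2 ▸ esStep_antitone G S hw.1) (hv.2 ▸ esStep_antitone G S hw.2)

theorem sum_Kk_filter_mem (S : Finset V) (z : V) :
    ∑ S' ∈ univ.filter (z ∈ ·), Kk G S S' = pset G z S := by
  have hunion : (⋃ S' ∈ univ.filter (z ∈ ·),
      {u : ℝ | u ∈ Set.Icc (0 : ℝ) 1 ∧ esStep G S u = S'}) = Set.Icc 0 (pset G z S) := by
    ext u
    simp only [Set.mem_iUnion, Set.mem_ofPred_eq, mem_filter, mem_univ, true_and, exists_prop,
      Set.mem_Icc]
    constructor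
    · rintro ⟨S', hz, hu, rfl⟩
      exact ⟨hu.1, by simpa [esStep] using hz⟩
    · rintro ⟨hu0, hu⟩
      exact ⟨_, by simpa [esStep] using hu, ⟨hu0, hu.trans (pset_le_one G z S)⟩, rfl⟩
  calc ∑ S' ∈ univ.filter (z ∈ ·), Kk G S S'
      = (volume (⋃ S' ∈ univ.filter (z ∈ ·),
          {u : ℝ | u ∈ Set.Icc (0 : ℝ) 1 ∧ esStep G S u = S'})).toReal := by
        rw [measure_biUnion_finset (fun S₁ _ S₂ _ h => Set.disjoint_left.2 fun u h₁ h₂ =>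
            h (h₁.2 ▸ h₂.2)) fun S' _ => measurableSet_esStep_eq G S S', ENNReal.toReal_sum]
        · rfl
        · exact fun S' _ => measure_ne_top_of_subset (fun u hu => hu.1) (by simp)
    _ = pset G z S := by
        rw [hunion, Real.volume_Icc, sub_zero, ENNReal.toReal_ofReal (pset_nonneg G z S)]

end EvolvingSet

section DegAvg

omit [DecidableEq V]

def degAvg (G : SimpleGraph V) [DecidableRel G.Adj] (S : Finset V) (g : V → ℝ) : ℝ :=
  (∑ y ∈ S, (G.degree y : ℝ) * g y) / vol G S

variable (G : SimpleGraph V) [DecidableRel G.Adj]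

theorem degAvg_nonneg (S : Finset V) {g : V → ℝ} (hg : ∀ y, 0 ≤ g y) : 0 ≤ degAvg G S g :=
  div_nonneg (sum_nonneg fun y _ => mul_nonneg (Nat.cast_nonneg _) (hg y))
    (sum_nonneg fun _ _ => Nat.cast_nonneg _)

theorem degAvg_mono (S : Finset V) {g h : V → ℝ} (hgh : ∀ y, g y ≤ h y) :
    degAvg G S g ≤ degAvg G S h :=
  div_le_div_of_nonneg_right (sum_le_sum fun y _ => mul_le_mul_of_nonneg_left (hgh y)
    (Nat.cast_nonneg _)) (sum_nonneg fun _ _ => Nat.cast_nonneg _)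

theorem degAvg_singleton_le (x : V) {g : V → ℝ} (hg : 0 ≤ g x) : degAvg G {x} g ≤ g x := by
  rw [degAvg, vol, sum_singleton, sum_singleton]
  rcases eq_or_ne (G.degree x : ℝ) 0 with h | h
  · simpa [h] using hg
  · rw [mul_div_cancel_left₀ _ h]

end DegAvg

section VolumeBiased

variable (G : SimpleGraph V) [DecidableRel G.Adj]

theorem Kk_nonneg (S S' : Finset V) : 0 ≤ Kk G S S' := ENNReal.toReal_nonneg

theorem Khat_nonneg (S S' : Finset V) : 0 ≤ Khat G S S' :=
  mul_nonneg (by unfold vol; positivity) (Kk_nonneg G S S')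

theorem sum_Kk_mul_sum_degree (S : Finset V) (g : V → ℝ) :
    ∑ S', Kk G S S' * ∑ z ∈ S', (G.degree z : ℝ) * g z
      = ∑ y ∈ S, (G.degree y : ℝ) * ∑ z, walkP G y z * g z :=
  calc ∑ S', Kk G S S' * ∑ z ∈ S', (G.degree z : ℝ) * g z
      = ∑ z, (G.degree z : ℝ) * g z * ∑ S' ∈ univ.filter (z ∈ ·), Kk G S S' := by
        simp_rw [mul_sum]
        rw [sum_comm' (t' := univ) (s' := fun z => univ.filter (z ∈ ·)) (by simp)]
        simp_rw [mul_comm]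
    _ = ∑ z, ∑ y ∈ S, (G.degree y : ℝ) * walkP G y z * g z := by
        simp_rw [sum_Kk_filter_mem, pset, mul_sum]
        refine sum_congr rfl fun z _ => sum_congr rfl fun y _ => ?_
        rw [degree_mul_walkP_comm]
        ring
    _ = ∑ y ∈ S, (G.degree y : ℝ) * ∑ z, walkP G y z * g z := by
        rw [sum_comm]
        simp_rw [mul_sum, mul_assoc]

theorem Khat_mul_degAvg (S S' : Finset V) (g : V → ℝ) :
    Khat G S S' * degAvg G S' g = Kk G S S' * (∑ z ∈ S', (G.degree z : ℝ) * g z) / vol G S := by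
  unfold Khat degAvg
  by_cases hv : vol G S' = 0
  · have hdeg : ∀ z ∈ S', (G.degree z : ℝ) = 0 :=
      (sum_eq_zero_iff_of_nonneg fun _ _ => Nat.cast_nonneg _).1 hv
    have hsum : ∑ z ∈ S', (G.degree z : ℝ) * g z = 0 :=
      sum_eq_zero fun z hz => by rw [hdeg z hz, zero_mul]
    simp [hv, hsum]
  · field_simp

theorem sum_Khat_mul_degAvg (S : Finset V) (g : V → ℝ) :
    ∑ S', Khat G S S' * degAvg G S' g = degAvg G S fun y => ∑ z, walkP G y z * g z := by
  simp_rw [Khat_mul_degAvg, ← sum_div, sum_Kk_mul_sum_degree]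
  rfl

theorem sum_Khat_le_one (S : Finset V) : ∑ S', Khat G S S' ≤ 1 :=
  calc ∑ S', Khat G S S' = (∑ S', Kk G S S' * ∑ z ∈ S', (G.degree z : ℝ) * 1) / vol G S := by
        simp_rw [sum_div, Khat, mul_one]
        refine sum_congr rfl fun S' _ => ?_
        rw [vol]
        ring
    _ = vol G S / vol G S := by
        rw [sum_Kk_mul_sum_degree]
        simp_rw [mul_one, degree_mul_sum_walkP]
        rfl
    _ ≤ 1 := div_self_le_one _

theorem vol_sdiff_div_le_degAvg_escProb (S A : Finset V) (n : ℕ) :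
    vol G (S \ A) / vol G S ≤ degAvg G S fun y => escProb G y n A := by
  refine div_le_div_of_nonneg_right ?_ (sum_nonneg fun _ _ => Nat.cast_nonneg _)
  rw [vol, sdiff_eq_filter, sum_filter]
  refine sum_le_sum fun y _ => ?_
  split_ifs with hy
  · exact mul_nonneg (Nat.cast_nonneg _) (escProb_nonneg G y n A)
  · rw [degree_mul_escProb_of_notMem G hy]

theorem stoppedSum_Khat_le_escProb (B : Finset V → Prop) (A : Finset V) (n : ℕ) (x : V) :
    stoppedSum (Khat G) B (fun S => vol G (S \ A) / vol G S) n {x} ≤ escProb G x n A := by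
  refine (stoppedSum_le_of_supermartingale (Khat_nonneg G)
    (F := fun n S => degAvg G S fun y => escProb G y n A)
    (fun S => degAvg_nonneg G S fun y => escProb_nonneg G y 0 A)
    (fun n S _ => vol_sdiff_div_le_degAvg_escProb G S A n) (fun n S _ => ?_) n {x}).trans
    (degAvg_singleton_le G x (escProb_nonneg G x n A))
  rw [sum_Khat_mul_degAvg]
  exact degAvg_mono G S fun y => sum_walkP_mul_escProb_le G y n A

end VolumeBiased

/-- Lemma 6: for any vertex `x`, set `A`, integer `T ≥ 0` and `λ > 0`, the
volume-biased evolving set process started from `{x}` satisfies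
`P̂_x[max_{0 ≤ t ≤ T} μ(S_t \ A)/μ(S_t) > λ·esc(x,T,A)] < 1/λ`. -/
theorem statement13 (G : SimpleGraph V) [DecidableRel G.Adj]
    (x : V) (A : Finset V) (T : ℕ) (lam : ℝ) (hlam : 0 < lam) :
    (Epath (Khat G) {x} T fun w =>
      if ∃ t : Fin (T+1), lam * escProb G x T A < vol G (w t \ A) / vol G (w t)
      then 1 else 0) < 1 / lam := by
  set B : Finset V → Prop := fun S => lam * escProb G x T A < vol G (S \ A) / vol G S
  set N := stoppedSum (Khat G) B (fun _ => 1) T {x}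
  have hP : Epath (Khat G) {x} T (fun w => if ∃ t, B (w t) then 1 else 0) ≤ N :=
    pathSum_exists_le_stoppedSum (Khat_nonneg G) (sum_Khat_le_one G) T {x}
  refine hP.trans_lt ?_
  rcases le_or_gt N 0 with hN | hN
  · exact hN.trans_lt (one_div_pos.2 hlam)
  have hNesc : lam * escProb G x T A * N < escProb G x T A :=
    (mul_stoppedSum_one_lt (Khat_nonneg G) (fun S hS => hS) T {x} hN).trans_le
      (stoppedSum_Khat_le_escProb G B A T x)
  have hesc := escProb_nonneg G x T A
  rw [lt_div_iff₀ hlam]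
  nlinarith
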